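/- Let X ⊆ ℝ^d be closed, A ⊆ ℝ^m compact, r : X × A × X → ℝ Lipschitz with constant L_r, v : X → ℝ bounded continuous and L_r-Lipschitz, 0 < α < 1, and let P^true : X × A → M₁^q(X) be a probability kernel that is L_P-Lipschitz in q-Wasserstein distance. Define the Bellman operator T^true v(x₀) := sup_{a∈A} ∫_X (r(x₀,a,x₁) + α v(x₁)) dP^true(x₀,a)(x₁). Then T^true v is Lipschitz with constant L_r(1 + (1+α)L_P), i.e., |T^true v(x₀) − T^true v(x₀')| ≤ L_r(1 + (1+α)L_P)·‖x₀ − x₀'‖ for all x₀, x₀' ∈ X. -/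

import Mathlib

open MeasureTheory
open scoped NNReal ENNReal

/-- The `q`-Wasserstein distance between two measures on a metric measurable space,
defined as the infimum over couplings of `(∫ dist^q dπ)^{1/q}`. -/
noncomputable def Wdist {E : Type*} [MeasurableSpace E] [PseudoMetricSpace E]
    (q : ℕ) (P Q : Measure E) : ℝ :=
  sInf {c : ℝ | ∃ π : Measure (E × E), π.map Prod.fst = P ∧ π.map Prod.snd = Q ∧
    c = (∫ p, dist p.1 p.2 ^ q ∂π) ^ ((q : ℝ)⁻¹)}

/-- The Bellman operator `T v(x₀) = sup_{a∈A} ∫ (r(x₀,a,x₁) + α v(x₁)) dK(x₀,a)(x₁)`. -/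
noncomputable def bellman {X A : Type*} [MeasurableSpace X]
    (K : X → A → Measure X) (r : X → A → X → ℝ) (α : ℝ) (v : X → ℝ) : X → ℝ :=
  fun x₀ => ⨆ a : A, ∫ x₁, (r x₀ a x₁ + α * v x₁) ∂(K x₀ a)

/-! The Bellman integrand `y ↦ r x' a' y + α * v y` is `(1 + α) Lr`-Lipschitz. Integrating a
Lipschitz function against any coupling `π` of `K x a` and `K x' a'` moves its integral by at most
`L ∫ d dπ ≤ L (∫ d^q dπ)^(1/q)` (Jensen), hence, taking the infimum over couplings, by
`L * Wdist q (K x a) (K x' a')`, which the kernel bounds by `L LP (dist x x' + dist a a')`;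
changing `(x, a)` inside `r` costs another `Lr (dist x x' + dist a a')`. Hence the action values
are jointly Lipschitz in `(x, a)`, and so is their supremum over the bounded action set as a
function of `x`. -/

theorem integral_le_integral_pow_rpow_inv {Ω : Type*} [MeasurableSpace Ω] {μ : Measure Ω}
    [IsProbabilityMeasure μ] {q : ℕ} (hq : 1 ≤ q) {f : Ω → ℝ} (hf0 : ∀ x, 0 ≤ f x)
    (hf : MemLp f q μ) :
    ∫ x, f x ∂μ ≤ (∫ x, f x ^ q ∂μ) ^ ((q : ℝ)⁻¹) := by
  have hq0 : q ≠ 0 := by omega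
  have jensen : (∫ x, f x ∂μ) ^ q ≤ ∫ x, f x ^ q ∂μ := by
    refine (convexOn_pow q).map_integral_le (continuous_pow q).continuousOn isClosed_Ici
      (.of_forall hf0) (hf.integrable (by exact_mod_cast hq)) ?_
    simpa [Function.comp_def, Real.norm_eq_abs, abs_of_nonneg (hf0 _)] using
      hf.integrable_norm_pow hq0
  calc ∫ x, f x ∂μ = ((∫ x, f x ∂μ) ^ q) ^ ((q : ℝ)⁻¹) :=
        (Real.pow_rpow_inv_natCast (integral_nonneg hf0) hq0).symm
    _ ≤ (∫ x, f x ^ q ∂μ) ^ ((q : ℝ)⁻¹) :=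
        Real.rpow_le_rpow (pow_nonneg (integral_nonneg hf0) q) jensen (by positivity)

theorem LipschitzWith.integrable_of_integrable_dist {E : Type*} [MeasurableSpace E]
    [PseudoMetricSpace E] [OpensMeasurableSpace E] {μ : Measure E} [IsFiniteMeasure μ]
    {L : ℝ≥0} {h : E → ℝ} (hh : LipschitzWith L h) {c : E}
    (hc : Integrable (fun x => dist x c) μ) : Integrable h μ := by
  refine ((integrable_const |h c|).add (hc.const_mul L)).mono'
    hh.continuous.aestronglyMeasurable (.of_forall fun x => ?_)
  calc ‖h x‖ = |h c + (h x - h c)| := by rw [Real.norm_eq_abs, add_sub_cancel]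
    _ ≤ |h c| + |h x - h c| := abs_add_le _ _
    _ ≤ |h c| + L * dist x c := by
        gcongr
        rw [← Real.dist_eq]
        exact hh.dist_le_mul x c

section Coupling

variable {E : Type*} [MeasurableSpace E] [PseudoMetricSpace E] [BorelSpace E]
  [SecondCountableTopology E] {P Q : Measure E} {π : Measure (E × E)} {q : ℕ} {c : E}

theorem memLp_dist_of_map_fst_of_map_snd (hπ₁ : π.map Prod.fst = P) (hπ₂ : π.map Prod.snd = Q)
    (hP : MemLp (fun x => dist x c) q P) (hQ : MemLp (fun x => dist x c) q Q) :
    MemLp (fun p : E × E => dist p.1 p.2) q π := by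
  subst hπ₁ hπ₂
  have h₁ := hP.comp_of_map measurable_fst.aemeasurable
  have h₂ := hQ.comp_of_map measurable_snd.aemeasurable
  refine (h₁.add h₂).mono (continuous_fst.dist continuous_snd).aestronglyMeasurable
    (.of_forall fun p => ?_)
  simp only [Function.comp_apply, Pi.add_apply, Real.norm_eq_abs]
  rw [abs_of_nonneg dist_nonneg, abs_of_nonneg (by positivity)]
  exact dist_triangle_right _ _ _

theorem integral_sub_integral_le_of_map_fst_of_map_snd [IsProbabilityMeasure P] (hq : 1 ≤ q)
    (hπ₁ : π.map Prod.fst = P) (hπ₂ : π.map Prod.snd = Q)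
    (hP : MemLp (fun x => dist x c) q P) (hQ : MemLp (fun x => dist x c) q Q)
    {L : ℝ≥0} {h : E → ℝ} (hh : LipschitzWith L h) :
    ∫ x, h x ∂P - ∫ x, h x ∂Q ≤ L * (∫ p, dist p.1 p.2 ^ q ∂π) ^ ((q : ℝ)⁻¹) := by
  have hq' : (1 : ℝ≥0∞) ≤ q := by exact_mod_cast hq
  have hdist := memLp_dist_of_map_fst_of_map_snd hπ₁ hπ₂ hP hQ
  subst hπ₁ hπ₂
  have : IsProbabilityMeasure π :=
    (Measure.isProbabilityMeasure_map_iff measurable_fst.aemeasurable).mp ‹_›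
  have h₁ : Integrable (fun p : E × E => h p.1) π :=
    (hh.integrable_of_integrable_dist (hP.integrable hq')).comp_measurable measurable_fst
  have h₂ : Integrable (fun p : E × E => h p.2) π :=
    (hh.integrable_of_integrable_dist (hQ.integrable hq')).comp_measurable measurable_snd
  rw [integral_map measurable_fst.aemeasurable hh.continuous.aestronglyMeasurable,
    integral_map measurable_snd.aemeasurable hh.continuous.aestronglyMeasurable,
    ← integral_sub h₁ h₂]
  calc ∫ p, (h p.1 - h p.2) ∂π ≤ ∫ p, L * dist p.1 p.2 ∂π :=
        integral_mono (h₁.sub h₂) ((hdist.integrable hq').const_mul _) fun p =>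
          (le_abs_self _).trans (by rw [← Real.dist_eq]; exact hh.dist_le_mul _ _)
    _ = L * ∫ p, dist p.1 p.2 ∂π := integral_const_mul _ _
    _ ≤ L * (∫ p, dist p.1 p.2 ^ q ∂π) ^ ((q : ℝ)⁻¹) := by
        gcongr
        exact integral_le_integral_pow_rpow_inv hq (fun _ => dist_nonneg) hdist

-- The moment bounds make every coupling's cost integrable, so no element of the set whose
-- infimum is `Wdist` is the junk value `∫ = 0`.
theorem integral_sub_integral_le_mul_wdist [IsProbabilityMeasure P] [IsProbabilityMeasure Q]
    (hq : 1 ≤ q) (hP : MemLp (fun x => dist x c) q P) (hQ : MemLp (fun x => dist x c) q Q)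
    {L : ℝ≥0} {h : E → ℝ} (hh : LipschitzWith L h) :
    ∫ x, h x ∂P - ∫ x, h x ∂Q ≤ L * Wdist q P Q := by
  have hne : (P.prod Q).map Prod.fst = P ∧ (P.prod Q).map Prod.snd = Q := by simp
  refine le_of_le_of_eq ?_ (Real.sInf_smul_of_nonneg (α := ℝ) L.2 _)
  refine le_csInf ⟨_, _, ⟨P.prod Q, hne.1, hne.2, rfl⟩, rfl⟩ ?_
  rintro _ ⟨_, ⟨π, hπ₁, hπ₂, rfl⟩, rfl⟩
  exact integral_sub_integral_le_of_map_fst_of_map_snd hq hπ₁ hπ₂ hP hQ hh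

end Coupling

theorem memLp_dist_of_integrable_norm_pow {Ω E : Type*} [MeasurableSpace Ω]
    [NormedAddCommGroup E] {μ : Measure Ω} [IsFiniteMeasure μ] {q : ℕ} (hq : q ≠ 0)
    {f : Ω → E} (hf : AEStronglyMeasurable f μ) (hfq : Integrable (fun ω => ‖f ω‖ ^ q) μ)
    (e : E) : MemLp (fun ω => dist (f ω) e) q μ := by
  have hf' : MemLp f q μ := by
    rw [← integrable_norm_rpow_iff hf (by exact_mod_cast hq) (by simp)]
    simpa using hfq
  simp_rw [dist_eq_norm]
  exact (hf'.sub (memLp_const e)).norm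

-- `A` bounded keeps `⨆ a, f x' a` a genuine supremum rather than the junk value `0`.
theorem iSup_sub_iSup_le_mul_dist {X A : Type*} [PseudoMetricSpace X] [PseudoMetricSpace A]
    [Nonempty A] [BoundedSpace A] {f : X → A → ℝ} {C : ℝ} (hC : 0 ≤ C)
    (hf : ∀ x x' a a', f x a - f x' a' ≤ C * (dist x x' + dist a a')) (x x' : X) :
    (⨆ a, f x a) - ⨆ a, f x' a ≤ C * dist x x' := by
  obtain ⟨D, hD⟩ := Metric.boundedSpace_iff.mp ‹BoundedSpace A›
  have hbdd : BddAbove (Set.range (f x')) := by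
    obtain ⟨a₀⟩ := ‹Nonempty A›
    refine ⟨f x' a₀ + C * D, Set.forall_mem_range.mpr fun a => ?_⟩
    have h := hf x' x' a a₀
    rw [dist_self, zero_add] at h
    nlinarith [hD a a₀]
  rw [sub_le_iff_le_add]
  refine ciSup_le fun a => ?_
  have h := hf x x' a a
  rw [dist_self, add_zero] at h
  linarith [le_ciSup hbdd a]

noncomputable def actionValue {X A : Type*} [MeasurableSpace X] (K : X → A → Measure X)
    (r : X → A → X → ℝ) (α : ℝ) (v : X → ℝ) (x : X) (a : A) : ℝ :=
  ∫ y, (r x a y + α * v y) ∂(K x a)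

section Bellman

variable {X A : Type*} [PseudoMetricSpace X] [PseudoMetricSpace A]
  {r : X → A → X → ℝ} {v : X → ℝ} {α Lr : ℝ}

theorem lipschitzWith_reward_add_mul_value (hα : 0 ≤ α) (hLr : 0 ≤ Lr)
    (hr : ∀ x x' a a' y y', |r x a y - r x' a' y'| ≤ Lr * (dist x x' + dist a a' + dist y y'))
    (hv : ∀ y y', |v y - v y'| ≤ Lr * dist y y') (x : X) (a : A) :
    LipschitzWith (Real.toNNReal ((1 + α) * Lr)) fun y => r x a y + α * v y := by
  refine LipschitzWith.of_dist_le_mul fun y y' => ?_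
  rw [Real.coe_toNNReal _ (by positivity), Real.dist_eq]
  have hry : |r x a y - r x a y'| ≤ Lr * dist y y' := by simpa using hr x x a a y y'
  calc |r x a y + α * v y - (r x a y' + α * v y')|
      = |(r x a y - r x a y') + α * (v y - v y')| := by ring_nf
    _ ≤ |r x a y - r x a y'| + α * |v y - v y'| := by
        rw [← abs_of_nonneg hα, ← abs_mul, abs_of_nonneg hα]
        exact abs_add_le _ _
    _ ≤ Lr * dist y y' + α * (Lr * dist y y') := by gcongr; exact hv y y'
    _ = (1 + α) * Lr * dist y y' := by ring

theorem actionValue_sub_actionValue_le [MeasurableSpace X] [BorelSpace X]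
    [SecondCountableTopology X] {K : X → A → Measure X} {LP : ℝ} {q : ℕ} (hq : 1 ≤ q)
    (hα : 0 ≤ α) (hLr : 0 ≤ Lr)
    (hr : ∀ x x' a a' y y', |r x a y - r x' a' y'| ≤ Lr * (dist x x' + dist a a' + dist y y'))
    (hv : ∀ y y', |v y - v y'| ≤ Lr * dist y y') [∀ x a, IsProbabilityMeasure (K x a)]
    (hmom : ∀ x a c, MemLp (fun y => dist y c) q (K x a))
    (hK : ∀ x x' a a', Wdist q (K x a) (K x' a') ≤ LP * (dist x x' + dist a a'))
    (x x' : X) (a a' : A) :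
    actionValue K r α v x a - actionValue K r α v x' a'
      ≤ Lr * (1 + (1 + α) * LP) * (dist x x' + dist a a') := by
  have hq' : (1 : ℝ≥0∞) ≤ q := by exact_mod_cast hq
  have hint : ∀ x₁ a₁, Integrable (fun y => r x₁ a₁ y + α * v y) (K x a) := fun x₁ a₁ =>
    (lipschitzWith_reward_add_mul_value hα hLr hr hv x₁ a₁).integrable_of_integrable_dist
      ((hmom x a x).integrable hq')
  have hreward : ∫ y, (r x a y + α * v y) ∂(K x a) - ∫ y, (r x' a' y + α * v y) ∂(K x a)
      ≤ Lr * (dist x x' + dist a a') := by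
    rw [← integral_sub (hint x a) (hint x' a')]
    calc ∫ y, (r x a y + α * v y - (r x' a' y + α * v y)) ∂(K x a)
        ≤ ∫ _, Lr * (dist x x' + dist a a') ∂(K x a) :=
          integral_mono ((hint x a).sub (hint x' a')) (integrable_const _) fun y =>
            (le_abs_self _).trans (by simpa using hr x x' a a' y y)
      _ = Lr * (dist x x' + dist a a') := by simp
  have htransition : ∫ y, (r x' a' y + α * v y) ∂(K x a) - actionValue K r α v x' a'
      ≤ (1 + α) * Lr * (LP * (dist x x' + dist a a')) := by
    have h := integral_sub_integral_le_mul_wdist hq (hmom x a x) (hmom x' a' x)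
      (lipschitzWith_reward_add_mul_value hα hLr hr hv x' a')
    rw [Real.coe_toNNReal _ (by positivity)] at h
    exact h.trans (by gcongr; exact hK x x' a a')
  calc actionValue K r α v x a - actionValue K r α v x' a'
      = (actionValue K r α v x a - ∫ y, (r x' a' y + α * v y) ∂(K x a))
        + (∫ y, (r x' a' y + α * v y) ∂(K x a) - actionValue K r α v x' a') := by ring
    _ ≤ Lr * (dist x x' + dist a a') + (1 + α) * Lr * (LP * (dist x x' + dist a a')) :=
        add_le_add hreward htransition
    _ = Lr * (1 + (1 + α) * LP) * (dist x x' + dist a a') := by ring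

end Bellman

theorem stmt_4_general (d m q : ℕ) (hq : 1 ≤ q) (Lr LP α : ℝ)
    (hLr : 0 < Lr) (hLP : 0 ≤ LP) (hα0 : 0 < α)
    (X : Set (EuclideanSpace ℝ (Fin d)))
    (A : Set (EuclideanSpace ℝ (Fin m))) (hAc : IsCompact A) (hAne : A.Nonempty)
    (r : X → A → X → ℝ)
    (hr : ∀ (x x' : X) (a a' : A) (y y' : X),
      |r x a y - r x' a' y'| ≤ Lr * (dist x x' + dist a a' + dist y y'))
    (v : X → ℝ)
    (hvl : ∀ x y : X, |v x - v y| ≤ Lr * dist x y)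
    (K : X → A → Measure X) (hprob : ∀ x a, IsProbabilityMeasure (K x a))
    (hmom : ∀ (x : X) (a : A),
      Integrable (fun z : X => ‖(z : EuclideanSpace ℝ (Fin d))‖ ^ q) (K x a))
    (hKlip : ∀ (x x' : X) (a a' : A),
      Wdist q (K x a) (K x' a') ≤ LP * (dist x x' + dist a a')) :
    ∀ x₀ x₀' : X,
      |bellman K r α v x₀ - bellman K r α v x₀'| ≤ Lr * (1 + (1 + α) * LP) * dist x₀ x₀' := by
  have : Nonempty A := hAne.to_subtype
  have : BoundedSpace A := boundedSpace_val_set_iff.mpr hAc.isBounded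
  have hmom' : ∀ x a (c : X), MemLp (fun y => dist y c) q (K x a) := fun x a c =>
    memLp_dist_of_integrable_norm_pow (by omega) continuous_subtype_val.aestronglyMeasurable
      (hmom x a) c
  have hQ := actionValue_sub_actionValue_le hq hα0.le hLr.le hr hvl hmom' hKlip
  have hC : 0 ≤ Lr * (1 + (1 + α) * LP) := by positivity
  intro x₀ x₀'
  rw [abs_sub_le_iff]
  exact ⟨iSup_sub_iSup_le_mul_dist hC hQ x₀ x₀',
    dist_comm x₀ x₀' ▸ iSup_sub_iSup_le_mul_dist hC hQ x₀' x₀⟩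

/-- Base case of Lemma 4.1: `T^true v` is Lipschitz with constant `L_r (1 + (1+α) L_P)`. -/
theorem stmt_4 (d m q : ℕ) (hq : 1 ≤ q) (Lr LP α : ℝ)
    (hLr : 0 < Lr) (hLP : 0 ≤ LP) (hα0 : 0 < α) (hα1 : α < 1)
    (X : Set (EuclideanSpace ℝ (Fin d))) (hXc : IsClosed X) (hXne : X.Nonempty)
    (A : Set (EuclideanSpace ℝ (Fin m))) (hAc : IsCompact A) (hAne : A.Nonempty)
    (r : X → A → X → ℝ)
    (hr : ∀ (x x' : X) (a a' : A) (y y' : X),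
      |r x a y - r x' a' y'| ≤ Lr * (dist x x' + dist a a' + dist y y'))
    (v : X → ℝ) (hvb : ∃ M : ℝ, ∀ x, |v x| ≤ M) (hvc : Continuous v)
    (hvl : ∀ x y : X, |v x - v y| ≤ Lr * dist x y)
    (K : X → A → Measure X) (hprob : ∀ x a, IsProbabilityMeasure (K x a))
    (hmom : ∀ (x : X) (a : A),
      Integrable (fun z : X => ‖(z : EuclideanSpace ℝ (Fin d))‖ ^ q) (K x a))
    (hKlip : ∀ (x x' : X) (a a' : A),
      Wdist q (K x a) (K x' a') ≤ LP * (dist x x' + dist a a')) :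
    ∀ x₀ x₀' : X,
      |bellman K r α v x₀ - bellman K r α v x₀'| ≤ Lr * (1 + (1 + α) * LP) * dist x₀ x₀' :=
  stmt_4_general d m q hq Lr LP α hLr hLP hα0 X A hAc hAne r hr v hvl K hprob hmom hKlip
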